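/- Let k > 0, q < −1 and x ∈ ℝ. Then the function u ↦ e^{i(u+iq)x}·k·e^{−i(u+iq)log k} / (i(u+iq)·(i(u+iq) − 1)) is integrable on ℝ and (1/2π)·∫_ℝ e^{i(u+iq)x}·k·e^{−i(u+iq)log k} / (i(u+iq)·(i(u+iq) − 1)) du = max(e^{x} − k, 0); that is, the call payoff is recovered from its Fourier transform by integration along the horizontal contour Im(y) = q. -/

import Mathlib

open MeasureTheory Complex Set
open scoped FourierTransform Real

lemma integrableOn_cexp_Ioi' {c : ℂ} (hc : c.re < 0) (a : ℝ) :
    IntegrableOn (fun t : ℝ => Complex.exp (c * t)) (Ioi a) := by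
  have hb : (0:ℝ) < -c.re := by linarith
  refine (exp_neg_integrableOn_Ioi a hb).mono' ?_ ?_
  · exact (Complex.continuous_exp.comp (by fun_prop)).aestronglyMeasurable
  · filter_upwards with t
    rw [Complex.norm_exp]
    simp [Complex.mul_re]

lemma integral_cexp_Ioi' {c : ℂ} (hc : c.re < 0) (a : ℝ) :
    ∫ t in Ioi a, Complex.exp (c * t) = -Complex.exp (c * a) / c := by
  have hc0 : c ≠ 0 := fun h => by simp [h] at hc
  have hd : ∀ t ∈ Ioi a, HasDerivAt (fun t : ℝ => Complex.exp (c * t) / c)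
      (Complex.exp (c * t)) t := by
    intro t _
    have h1 : HasDerivAt (fun y : ℂ => Complex.exp (c * y) / c)
        (Complex.exp (c * t) * c / c) (t : ℂ) := by
      simpa using (((hasDerivAt_id (t:ℂ)).const_mul c).cexp).div_const c
    rw [mul_div_cancel_right₀ _ hc0] at h1
    exact h1.comp_ofReal
  have hlim : Filter.Tendsto (fun t : ℝ => Complex.exp (c * t) / c)
      Filter.atTop (nhds 0) := by
    rw [tendsto_zero_iff_norm_tendsto_zero]
    have h2 : Filter.Tendsto (fun t : ℝ => Real.exp (c.re * t) / ‖c‖)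
        Filter.atTop (nhds 0) := by
      have h3 : Filter.Tendsto (fun t : ℝ => c.re * t) Filter.atTop Filter.atBot :=
        Filter.tendsto_id.const_mul_atTop_of_neg hc
      simpa using (Real.tendsto_exp_atBot.comp h3).div_const (‖c‖)
    refine h2.congr fun t => ?_
    rw [norm_div, Complex.norm_exp]
    simp [Complex.mul_re]
  have := integral_Ioi_of_hasDerivAt_of_tendsto
    ((Complex.continuous_exp.comp (by fun_prop)).div_const c).continuousWithinAt
    hd (integrableOn_cexp_Ioi' hc a) hlim
  rw [this]; simp [Function.comp]; ring

/-- Fourier inversion of the call payoff along the contour `Im(y) = q` with `q < −1`: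
the integrand is integrable on `ℝ` and
`(1/2π)·∫_ℝ e^{i(u+iq)x}·k·e^{−i(u+iq)log k}/(i(u+iq)·(i(u+iq) − 1)) du
  = max(e^{x} − k, 0)`. -/
theorem call_payoff_fourier_inversion (k q x : ℝ) (hk : 0 < k) (hq : q < -1) :
    Integrable (fun u : ℝ =>
      Complex.exp (Complex.I * ((u : ℂ) + Complex.I * q) * x) * (k : ℂ) *
          Complex.exp (-Complex.I * ((u : ℂ) + Complex.I * q) * (Real.log k : ℂ)) /
        (Complex.I * ((u : ℂ) + Complex.I * q) *
          (Complex.I * ((u : ℂ) + Complex.I * q) - 1))) ∧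
    (1 / (2 * (Real.pi : ℂ))) *
        ∫ u : ℝ, Complex.exp (Complex.I * ((u : ℂ) + Complex.I * q) * x) * (k : ℂ) *
            Complex.exp (-Complex.I * ((u : ℂ) + Complex.I * q) * (Real.log k : ℂ)) /
          (Complex.I * ((u : ℂ) + Complex.I * q) *
            (Complex.I * ((u : ℂ) + Complex.I * q) - 1))
      = ((max (Real.exp x - k) 0 : ℝ) : ℂ) := by
  set a : ℝ := Real.log k with ha
  have hea : Real.exp a = k := Real.exp_log hk
  set z : ℝ → ℂ := fun u => Complex.I * ((u:ℂ) + Complex.I * q) with hzdef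
  have hz_re : ∀ u : ℝ, (z u).re = -q := fun u => by simp [hzdef, Complex.mul_re]
  have hz_im : ∀ u : ℝ, (z u).im = u := fun u => by simp [hzdef, Complex.mul_im]
  have hz0 : ∀ u : ℝ, z u ≠ 0 := by
    intro u h
    have := hz_re u; rw [h] at this; simp at this; linarith
  have hz1 : ∀ u : ℝ, z u - 1 ≠ 0 := by
    intro u h
    have h2 := congrArg Complex.re h
    simp [Complex.sub_re, hz_re u] at h2; linarith
  -- The Fourier transform function G and the contour integrand Φ
  set G : ℝ → ℂ := fun u => (k : ℂ) *
      Complex.exp (-Complex.I * ((u:ℂ) + Complex.I * q) * (a : ℂ)) /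
      (z u * (z u - 1)) with hGdef
  set Φ : ℝ → ℂ := fun u =>
      Complex.exp (z u * (x : ℂ)) * (k : ℂ) *
        Complex.exp (-Complex.I * ((u:ℂ) + Complex.I * q) * (a : ℂ)) /
      (z u * (z u - 1)) with hΦdef
  have hΦG : ∀ u : ℝ, Φ u = Complex.exp (z u * (x : ℂ)) * G u := by
    intro u; simp only [hΦdef, hGdef]; ring
  -- norms
  have hexp_re : ∀ u : ℝ, (-Complex.I * ((u:ℂ) + Complex.I * q) * (a : ℂ)).re = q * a := by
    intro u
    have : -Complex.I * ((u:ℂ) + Complex.I * q) * (a : ℂ) = -(z u) * (a : ℂ) := by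
      simp only [hzdef]; ring
    rw [this]
    simp [Complex.mul_re, hz_re u, hz_im u]
  have hG_norm : ∀ u : ℝ, ‖G u‖ =
      k * Real.exp (q * a) / (‖z u‖ * ‖z u - 1‖) := by
    intro u
    simp only [hGdef, norm_div, norm_mul, map_mul,
      Complex.norm_real, Real.norm_eq_abs, Complex.norm_exp, hexp_re u, abs_of_pos hk]
  -- lower bound for the denominator
  set s : ℝ := Real.sqrt (min ((q+1)^2) 1) with hsdef
  have hs_pos : 0 < s := by
    apply Real.sqrt_pos.mpr
    have : q + 1 ≠ 0 := by linarith
    positivity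
  have habs_z : ∀ u : ℝ, Real.sqrt (1 + u^2) ≤ ‖z u‖ := by
    intro u
    rw [Complex.norm_def]
    apply Real.sqrt_le_sqrt
    rw [Complex.normSq_apply, hz_re u, hz_im u]
    nlinarith
  have habs_z1 : ∀ u : ℝ, s * Real.sqrt (1 + u^2) ≤ ‖z u - 1‖ := by
    intro u
    rw [Complex.norm_def, hsdef, ← Real.sqrt_mul (by positivity)]
    apply Real.sqrt_le_sqrt
    rw [Complex.normSq_apply, Complex.sub_re, Complex.sub_im, hz_re u, hz_im u]
    simp only [Complex.one_re, Complex.one_im]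
    rcases le_total ((q+1)^2) 1 with h | h
    · rw [min_eq_left h]; nlinarith
    · rw [min_eq_right h]; nlinarith
  have hdenom : ∀ u : ℝ, s * (1 + u^2) ≤ ‖z u‖ * ‖z u - 1‖ := by
    intro u
    have h1 := habs_z u
    have h2 := habs_z1 u
    have h3 : Real.sqrt (1 + u^2) * Real.sqrt (1 + u^2) = 1 + u^2 :=
      Real.mul_self_sqrt (by positivity)
    have h0 : (0:ℝ) ≤ Real.sqrt (1 + u^2) := Real.sqrt_nonneg _
    have h4 := mul_le_mul h1 h2 (by positivity) (norm_nonneg _)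
    nlinarith [h4, h3]
  have hG_bound : ∀ u : ℝ, ‖G u‖ ≤ (k * Real.exp (q * a) / s) * (1 + u^2)⁻¹ := by
    intro u
    rw [hG_norm u]
    have h4 : k * Real.exp (q*a) / (‖z u‖ * ‖z u - 1‖)
        ≤ k * Real.exp (q*a) / (s * (1 + u^2)) := by
      apply div_le_div_of_nonneg_left (by positivity) (by positivity) (hdenom u)
    calc k * Real.exp (q*a) / (‖z u‖ * ‖z u - 1‖)
        ≤ k * Real.exp (q*a) / (s * (1 + u^2)) := h4
      _ = (k * Real.exp (q*a) / s) * (1 + u^2)⁻¹ := by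
          rw [← div_div, div_eq_mul_inv]
  have hzcont : Continuous z := by
    rw [hzdef]; fun_prop
  have hGcont : Continuous G := by
    rw [hGdef]
    apply Continuous.div
    · fun_prop
    · exact ((hzcont.mul (hzcont.sub continuous_const)))
    · exact fun u => mul_ne_zero (hz0 u) (hz1 u)
  have hΦcont : Continuous Φ := by
    rw [hΦdef]
    apply Continuous.div
    · exact ((Complex.continuous_exp.comp (hzcont.mul continuous_const)).mul
        continuous_const).mul (Complex.continuous_exp.comp (by fun_prop))
    · exact ((hzcont.mul (hzcont.sub continuous_const)))
    · exact fun u => mul_ne_zero (hz0 u) (hz1 u)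
  have hΦ_norm : ∀ u : ℝ, ‖Φ u‖ = Real.exp (-q * x) * ‖G u‖ := by
    intro u
    rw [hΦG u, norm_mul]
    congr 1
    rw [Complex.norm_exp]
    congr 1
    simp [Complex.mul_re, hz_re u, hz_im u]
  have hΦint : Integrable Φ := by
    refine (integrable_inv_one_add_sq.const_mul
        (Real.exp (-q*x) * (k * Real.exp (q * a) / s))).mono'
      hΦcont.aestronglyMeasurable (Filter.Eventually.of_forall fun u => ?_)
    rw [hΦ_norm u]
    calc Real.exp (-q*x) * ‖G u‖
        ≤ Real.exp (-q*x) * ((k * Real.exp (q * a) / s) * (1 + u^2)⁻¹) := by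
          have := hG_bound u
          gcongr
      _ = Real.exp (-q*x) * (k * Real.exp (q * a) / s) * (1 + u^2)⁻¹ := by ring
  -- the payoff function on the real line
  set ψ : ℝ → ℂ := fun t => Complex.exp (((q+1 : ℝ) : ℂ) * t)
      - (k : ℂ) * Complex.exp (((q : ℝ) : ℂ) * t) with hψdef
  set h : ℝ → ℂ := fun t => ((Real.exp (q*t) * max (Real.exp t - k) 0 : ℝ) : ℂ) with hhdef
  have h_eq : h = (Ioi a).indicator ψ := by
    funext t
    by_cases ht : t ∈ Ioi a
    · rw [indicator_of_mem ht, hhdef, hψdef]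
      have h1 : (0:ℝ) ≤ Real.exp t - k := by
        rw [← hea]
        have := Real.exp_le_exp.mpr (le_of_lt ht)
        linarith
      simp only
      rw [max_eq_left h1]
      have e0 : Real.exp (q*t) * (Real.exp t - k) = Real.exp ((q+1)*t) - k * Real.exp (q*t) := by
        rw [add_mul, one_mul, Real.exp_add]; ring
      rw [e0]
      push_cast [Complex.ofReal_exp]
      ring
    · rw [indicator_of_notMem ht, hhdef]
      have ht' : t ≤ a := by simpa using ht
      have h1 : Real.exp t - k ≤ 0 := by
        rw [← hea]
        have := Real.exp_le_exp.mpr ht'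
        linarith
      simp [max_eq_right h1]
  have hψint : IntegrableOn ψ (Ioi a) := by
    rw [hψdef]
    apply Integrable.sub
    · exact integrableOn_cexp_Ioi' (by simp; linarith) a
    · exact (integrableOn_cexp_Ioi' (show ((q:ℝ):ℂ).re < 0 by simp; linarith) a).const_mul _
  have h_cont : Continuous h := by
    rw [hhdef]
    apply Complex.continuous_ofReal.comp
    exact (Real.continuous_exp.comp (by fun_prop)).mul
      ((Real.continuous_exp.sub continuous_const).max continuous_const)
  have h_int : Integrable h := by
    rw [h_eq]
    exact hψint.integrable_indicator measurableSet_Ioi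
  -- the Fourier transform of h is G ∘ (2π ·)
  have hFT : ∀ w : ℝ, 𝓕 h w = G (2*π*w) := by
    intro w
    set c₁ : ℂ := ((q+1:ℝ):ℂ) - ((2*π*w : ℝ):ℂ) * Complex.I with hc1def
    set c₂ : ℂ := ((q:ℝ):ℂ) - ((2*π*w : ℝ):ℂ) * Complex.I with hc2def
    have hc1re : c₁.re < 0 := by
      rw [hc1def]; simp [Complex.sub_re, Complex.mul_re]; linarith
    have hc2re : c₂.re < 0 := by
      rw [hc2def]; simp [Complex.sub_re, Complex.mul_re]; linarith
    rw [Real.fourier_real_eq_integral_exp_smul]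
    simp only [smul_eq_mul, h_eq]
    rw [show (fun v : ℝ => Complex.exp (((-2*π*v*w : ℝ):ℂ) * Complex.I) * (Ioi a).indicator ψ v)
        = (Ioi a).indicator (fun v => Complex.exp (((-2*π*v*w : ℝ):ℂ) * Complex.I) * ψ v) from
      funext fun v => by
        by_cases hv : v ∈ Ioi a
        · rw [indicator_of_mem hv, indicator_of_mem hv]
        · rw [indicator_of_notMem hv, indicator_of_notMem hv, mul_zero]]
    rw [integral_indicator measurableSet_Ioi]
    rw [setIntegral_congr_fun measurableSet_Ioi
      (show EqOn (fun v : ℝ => Complex.exp (((-2*π*v*w : ℝ):ℂ) * Complex.I) * ψ v)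
        (fun v : ℝ => Complex.exp (c₁ * v) - (k:ℂ) * Complex.exp (c₂ * v)) (Ioi a) from by
        intro v _
        simp only [hψdef]
        rw [mul_sub, ← Complex.exp_add,
          show ((-2*π*v*w : ℝ):ℂ) * Complex.I + ((q+1:ℝ):ℂ) * v = c₁ * v from by
            rw [hc1def]; push_cast; ring]
        congr 1
        rw [show Complex.exp (((-2*π*v*w : ℝ):ℂ) * Complex.I) * ((k:ℂ) * Complex.exp (((q:ℝ):ℂ) * v))
            = (k:ℂ) * (Complex.exp (((-2*π*v*w : ℝ):ℂ) * Complex.I) * Complex.exp (((q:ℝ):ℂ) * v)) from by ring,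
          ← Complex.exp_add,
          show ((-2*π*v*w : ℝ):ℂ) * Complex.I + ((q:ℝ):ℂ) * v = c₂ * v from by
            rw [hc2def]; push_cast; ring])]
    rw [integral_sub (integrableOn_cexp_Ioi' hc1re a)
      ((integrableOn_cexp_Ioi' hc2re a).const_mul _),
      integral_const_mul, integral_cexp_Ioi' hc1re a, integral_cexp_Ioi' hc2re a]
    -- now the algebra
    have hZ1 : c₁ = 1 - z (2*π*w) := by
      rw [hc1def, hzdef]; push_cast; linear_combination (q:ℂ) * Complex.I_sq
    have hZ2 : c₂ = -z (2*π*w) := by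
      rw [hc2def, hzdef]; push_cast; linear_combination (q:ℂ) * Complex.I_sq
    have hE : -Complex.I * (((2*π*w : ℝ):ℂ) + Complex.I * q) * (a:ℂ) = -(z (2*π*w)) * (a:ℂ) := by
      rw [hzdef]; ring
    have hsplit : Complex.exp ((1 - z (2*π*w)) * (a:ℂ))
        = (k:ℂ) * Complex.exp (-(z (2*π*w)) * (a:ℂ)) := by
      rw [show (1 - z (2*π*w)) * (a:ℂ) = (a:ℂ) + (-(z (2*π*w)) * (a:ℂ)) from by ring,
        Complex.exp_add, ← Complex.ofReal_exp, hea]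
    rw [hGdef]
    simp only
    rw [hE, hZ1, hZ2, hsplit]
    have h0 := hz0 (2*π*w)
    have h1 := hz1 (2*π*w)
    have h1' : (1:ℂ) - z (2*π*w) ≠ 0 := fun hcon => h1 (by linear_combination -hcon)
    field_simp
    ring
  have hFTfun : 𝓕 h = fun w => G (2*π*w) := funext hFT
  have h𝓕int : Integrable (𝓕 h) := by
    rw [hFTfun]
    refine (integrable_inv_one_add_sq.const_mul (k * Real.exp (q*a) / s)).mono'
      (hGcont.comp (by fun_prop)).aestronglyMeasurable
      (Filter.Eventually.of_forall fun w => ?_)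
    calc ‖G (2*π*w)‖ ≤ (k * Real.exp (q*a) / s) * (1 + (2*π*w)^2)⁻¹ := hG_bound _
      _ ≤ (k * Real.exp (q*a) / s) * (1 + w^2)⁻¹ := by
          have h9 : (9:ℝ) ≤ π^2 := by nlinarith [Real.pi_gt_three]
          have hπ : (1:ℝ) + w^2 ≤ 1 + (2*π*w)^2 := by nlinarith [h9, sq_nonneg w]
          gcongr
  have hinv : 𝓕⁻ (𝓕 h) x = h x := h_int.fourierInv_fourier_eq h𝓕int h_cont.continuousAt
  rw [Real.fourierInv_eq'] at hinv
  simp only [RCLike.inner_apply', conj_trivial, smul_eq_mul, hFT] at hinv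
  have hpoint : ∀ w : ℝ, Complex.exp (((2*π*(w*x) : ℝ):ℂ) * Complex.I) * G (2*π*w)
      = Complex.exp ((q:ℂ) * x) * Φ (2*π*w) := by
    intro w
    rw [hΦG,
      show Complex.exp ((q:ℂ)*x) * (Complex.exp (z (2*π*w) * x) * G (2*π*w))
        = Complex.exp ((q:ℂ)*x + z (2*π*w) * x) * G (2*π*w) from by
          rw [Complex.exp_add]; ring]
    congr 2
    rw [hzdef]
    push_cast
    linear_combination (-(q:ℂ) * (x:ℂ)) * Complex.I_sq
  rw [show (fun v : ℝ => Complex.exp (((2*π*(v*x) : ℝ):ℂ) * Complex.I) * G (2*π*v))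
      = fun v : ℝ => Complex.exp ((q:ℂ) * x) * Φ (2*π*v) from funext hpoint,
    integral_const_mul, Measure.integral_comp_mul_left Φ (2*π),
    abs_of_pos (show (0:ℝ) < (2*π)⁻¹ by positivity)] at hinv
  have hcast : h x = Complex.exp ((q:ℂ)*x) * ((max (Real.exp x - k) 0 : ℝ) : ℂ) := by
    rw [hhdef]
    push_cast [Complex.ofReal_exp]
    ring
  have hT := mul_left_cancel₀ (Complex.exp_ne_zero ((q:ℂ)*x)) (hinv.trans hcast)
  constructor
  · exact hΦint
  · rw [← hT, Complex.real_smul]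
    push_cast
    ring
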